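/- Let R be a local ring with maximal ideal M such that M contains a non-zero-divisor of R. Then (R : M) = (M : M) if and only if M is not a principal ideal of R. Moreover, if M = Rr for some r ∈ R, then (R : M) = Rr⁻¹ and (M : M) = R. -/

import Mathlib

/-!
If `x · M ⊆ R` but `x · M ⊄ M`, then `x m` is a unit `u` for some `m ∈ M`, and every `n ∈ M`
is `m · (x n) · u⁻¹`, so `M = R m`; hence `(R : M) = (M : M)` whenever `M` is not principal.
If `M = R r`, then `r` divides a non-zero-divisor, so it is one and `(I : M) = r⁻¹ I` for every
ideal `I`; this gives `(R : M) = R r⁻¹` and `(M : M) = R`, and `r⁻¹ ∉ R` separates the two.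
-/

/-- The colon construction `(J₁ : J₂) = {x ∈ T(R) : x·J₂ ⊆ J₁}` for subsets of the total
quotient ring `T(R)`. -/
def colonSet (R : Type*) [CommRing R] (J₁ J₂ : Set (FractionRing R)) :
    Set (FractionRing R) :=
  {x : FractionRing R | ∀ j ∈ J₂, x * j ∈ J₁}

/-- The image of `R` in its total quotient ring `T(R)`, as a set. -/
def Rset (R : Type*) [CommRing R] : Set (FractionRing R) :=
  Set.range (algebraMap R (FractionRing R))

/-- The image of an ideal of `R` in the total quotient ring `T(R)`. -/
def idealSet (R : Type*) [CommRing R] (I : Ideal R) : Set (FractionRing R) :=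
  algebraMap R (FractionRing R) '' (I : Set R)

/-- An ideal `I` of `R` is divisorial if `I = (R : (R : I))`. -/
def IsDivisorial (R : Type*) [CommRing R] (I : Ideal R) : Prop :=
  idealSet R I = colonSet R (Rset R) (colonSet R (Rset R) (idealSet R I))

open IsLocalRing

section

variable {R : Type*} [CommRing R]

lemma Rset_eq_idealSet_top : Rset R = idealSet R ⊤ :=
  Set.image_univ.symm

lemma idealSet_subset_Rset (I : Ideal R) : idealSet R I ⊆ Rset R :=
  Set.image_subset_range _ _

lemma colonSet_mono_left {J₁ J₁' : Set (FractionRing R)} (h : J₁ ⊆ J₁')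
    (J₂ : Set (FractionRing R)) : colonSet R J₁ J₂ ⊆ colonSet R J₁' J₂ :=
  fun _ hx j hj => h (hx j hj)

lemma mem_nonZeroDivisors_of_mem_span_singleton {r x : R} (hx : x ∈ Ideal.span {r})
    (hx' : x ∈ nonZeroDivisors R) : r ∈ nonZeroDivisors R := by
  obtain ⟨c, rfl⟩ := Ideal.mem_span_singleton'.mp hx
  exact (mul_mem_nonZeroDivisors.mp hx').2

lemma mem_colonSet_span_singleton_iff {I : Ideal R} {r : R} {x : FractionRing R} :
    x ∈ colonSet R (idealSet R I) (idealSet R (Ideal.span {r})) ↔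
      x * algebraMap R (FractionRing R) r ∈ idealSet R I := by
  refine ⟨fun hx => hx _ ⟨r, Ideal.mem_span_singleton_self r, rfl⟩, ?_⟩
  rintro ⟨a, ha, hax⟩ _ ⟨_, hy, rfl⟩
  obtain ⟨c, rfl⟩ := Ideal.mem_span_singleton'.mp hy
  refine ⟨c * a, I.mul_mem_left c ha, ?_⟩
  rw [map_mul, map_mul, hax]
  ring

lemma eq_span_singleton_of_mul_eq_isUnit {I : Ideal R} {x : FractionRing R}
    (hx : x ∈ colonSet R (Rset R) (idealSet R I)) {m u : R} (hm : m ∈ I) (hu : IsUnit u)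
    (hxm : x * algebraMap R (FractionRing R) m = algebraMap R (FractionRing R) u) :
    I = Ideal.span {m} := by
  refine le_antisymm (fun n hn => ?_) (Ideal.span_le.mpr (Set.singleton_subset_iff.mpr hm))
  obtain ⟨b, hb⟩ := hx _ ⟨n, hn, rfl⟩
  have hnu : n * u = b * m := IsFractionRing.injective R (FractionRing R) <| by
    rw [map_mul, map_mul, ← hxm, hb]
    ring
  rw [Ideal.mem_span_singleton']
  exact ⟨b * ↑hu.unit⁻¹, by rw [mul_right_comm, ← hnu, mul_assoc, hu.mul_val_inv, mul_one]⟩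

section

variable {r : R} (hr : r ∈ nonZeroDivisors R)
include hr

lemma isUnit_algebraMap_of_mem_nonZeroDivisors :
    IsUnit (algebraMap R (FractionRing R) r) :=
  IsLocalization.map_units (FractionRing R) ⟨r, hr⟩

lemma colonSet_Rset_span_singleton :
    colonSet R (Rset R) (idealSet R (Ideal.span {r})) =
      {x | ∃ a : R, x = algebraMap R (FractionRing R) a *
        Ring.inverse (algebraMap R (FractionRing R) r)} := by
  ext x
  rw [Rset_eq_idealSet_top, mem_colonSet_span_singleton_iff, Set.mem_ofPred_eq]
  simp only [idealSet, Submodule.top_coe, Set.image_univ, Set.mem_range,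
    Ring.eq_mul_inverse_iff_mul_eq _ _ _ (isUnit_algebraMap_of_mem_nonZeroDivisors hr), eq_comm]

lemma colonSet_span_singleton_self :
    colonSet R (idealSet R (Ideal.span {r})) (idealSet R (Ideal.span {r})) = Rset R := by
  have hu := isUnit_algebraMap_of_mem_nonZeroDivisors hr
  ext x
  rw [mem_colonSet_span_singleton_iff]
  constructor
  · rintro ⟨_, hy, hyx⟩
    obtain ⟨c, rfl⟩ := Ideal.mem_span_singleton'.mp hy
    refine ⟨c, hu.mul_right_cancel ?_⟩
    rw [← hyx, map_mul]
  · rintro ⟨c, rfl⟩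
    exact ⟨c * r, Ideal.mul_mem_left _ c (Ideal.mem_span_singleton_self r), map_mul _ c r⟩

lemma colonSet_Rset_span_singleton_ne (hI : Ideal.span {r} ≠ ⊤) :
    colonSet R (Rset R) (idealSet R (Ideal.span {r})) ≠
      colonSet R (idealSet R (Ideal.span {r})) (idealSet R (Ideal.span {r})) := by
  intro heq
  have hinv : Ring.inverse (algebraMap R (FractionRing R) r) ∈ Rset R := by
    rw [← colonSet_span_singleton_self hr, ← heq, colonSet_Rset_span_singleton hr]
    exact ⟨1, by rw [map_one, one_mul]⟩
  obtain ⟨a, ha⟩ := hinv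
  have har : a * r = 1 := IsFractionRing.injective R (FractionRing R) <| by
    rw [map_mul, ha, map_one,
      Ring.inverse_mul_cancel _ (isUnit_algebraMap_of_mem_nonZeroDivisors hr)]
  exact hI (Ideal.span_singleton_eq_top.mpr (IsUnit.of_mul_eq_one_right a har))

end

end

lemma colonSet_maximalIdeal_eq_of_not_isPrincipal {R : Type*} [CommRing R] [IsLocalRing R]
    (h : ¬ (maximalIdeal R).IsPrincipal) :
    colonSet R (Rset R) (idealSet R (maximalIdeal R)) =
      colonSet R (idealSet R (maximalIdeal R)) (idealSet R (maximalIdeal R)) := by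
  refine subset_antisymm (fun x hx => ?_) (colonSet_mono_left (idealSet_subset_Rset _) _)
  rintro _ ⟨m, hm, rfl⟩
  obtain ⟨u, hu⟩ := hx _ ⟨m, hm, rfl⟩
  refine ⟨u, by_contra fun hu' => h ⟨m, ?_⟩, hu⟩
  rw [Ideal.submodule_span_eq]
  exact eq_span_singleton_of_mul_eq_isUnit hx hm (notMem_maximalIdeal.mp hu') hu.symm

theorem stmt16 {R : Type*} [CommRing R] [IsLocalRing R]
    (hreg : ∃ x ∈ maximalIdeal R, x ∈ nonZeroDivisors R) :
    (colonSet R (Rset R) (idealSet R (maximalIdeal R)) =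
        colonSet R (idealSet R (maximalIdeal R)) (idealSet R (maximalIdeal R)) ↔
      ¬ (maximalIdeal R).IsPrincipal) ∧
    ∀ r : R, maximalIdeal R = Ideal.span {r} →
      colonSet R (Rset R) (idealSet R (maximalIdeal R)) =
        {x : FractionRing R | ∃ a : R,
          x = algebraMap R (FractionRing R) a *
            Ring.inverse (algebraMap R (FractionRing R) r)} ∧
      colonSet R (idealSet R (maximalIdeal R)) (idealSet R (maximalIdeal R)) = Rset R := by
  have regular : ∀ r : R, maximalIdeal R = Ideal.span {r} → r ∈ nonZeroDivisors R := by
    obtain ⟨x, hxM, hx⟩ := hreg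
    exact fun r hr => mem_nonZeroDivisors_of_mem_span_singleton (hr ▸ hxM) hx
  refine ⟨⟨fun heq ⟨r, hr⟩ => ?_, colonSet_maximalIdeal_eq_of_not_isPrincipal⟩, fun r hr => ?_⟩
  · rw [Ideal.submodule_span_eq] at hr
    rw [hr] at heq
    exact colonSet_Rset_span_singleton_ne (regular r hr)
      (hr ▸ (maximalIdeal.isMaximal R).ne_top) heq
  · rw [hr]
    exact ⟨colonSet_Rset_span_singleton (regular r hr), colonSet_span_singleton_self (regular r hr)⟩
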